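/- Let Λ, u_0, f, g : ℝ² → ℝ be twice differentiable functions satisfying the system: (i) f_x + g_y = 0; (ii) (u_0)_x + 2Λ_x - (1/2) g (f_y - g_x) = 0; (iii) -(u_0)_y + 2Λ_y + (1/2) f (f_y - g_x) = 0. Then the following two conservation laws hold: (u_0 + 2Λ + (1/4)(g² - f²))_x - ((1/2) f g)_y = 0 and (-u_0 + 2Λ - (1/4)(g² - f²))_y - ((1/2) f g)_x = 0. -/

import Mathlib

/-!
Each conservation law is a pointwise linear combination of the system. Substituting (ii), resp.
(iii), leaves the nonlinear term `½ g (f_y - g_x)`, resp. `½ f (f_y - g_x)`, which by (i) is an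
exact derivative up to the quadratic part of the density: `g f_y = (fg)_y + f f_x` and
`f g_x = (fg)_x + g g_y`. Hence (i) enters with the coefficient `-f/2`, resp. `-g/2`.
-/

section
variable {E : Type*} [NormedAddCommGroup E] [NormedSpace ℝ E] {Λ u₀ f g : E → ℝ} {p x y : E}

theorem first_conservation_law_at (hΛ : DifferentiableAt ℝ Λ p) (hu₀ : DifferentiableAt ℝ u₀ p)
    (hf : DifferentiableAt ℝ f p) (hg : DifferentiableAt ℝ g p)
    (h1 : fderiv ℝ f p x + fderiv ℝ g p y = 0)
    (h2 : fderiv ℝ u₀ p x + 2 * fderiv ℝ Λ p x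
      - (1 / 2) * g p * (fderiv ℝ f p y - fderiv ℝ g p x) = 0) :
    fderiv ℝ (fun q => u₀ q + 2 * Λ q + (1 / 4) * ((g q) ^ 2 - (f q) ^ 2)) p x
      - fderiv ℝ (fun q => (1 / 2) * f q * g q) p y = 0 := by
  simp (disch := fun_prop) only [fderiv_fun_add, fderiv_fun_sub, fderiv_fun_mul, fderiv_fun_pow,
    fderiv_const_apply, add_apply, sub_apply, smul_apply, zero_apply, smul_eq_mul, nsmul_eq_mul]
  linear_combination h2 - f p / 2 * h1

theorem second_conservation_law_at (hΛ : DifferentiableAt ℝ Λ p) (hu₀ : DifferentiableAt ℝ u₀ p)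
    (hf : DifferentiableAt ℝ f p) (hg : DifferentiableAt ℝ g p)
    (h1 : fderiv ℝ f p x + fderiv ℝ g p y = 0)
    (h3 : -fderiv ℝ u₀ p y + 2 * fderiv ℝ Λ p y
      + (1 / 2) * f p * (fderiv ℝ f p y - fderiv ℝ g p x) = 0) :
    fderiv ℝ (fun q => -u₀ q + 2 * Λ q - (1 / 4) * ((g q) ^ 2 - (f q) ^ 2)) p y
      - fderiv ℝ (fun q => (1 / 2) * f q * g q) p x = 0 := by
  simp (disch := fun_prop) only [fderiv_fun_add, fderiv_fun_sub, fderiv_fun_neg, fderiv_fun_mul,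
    fderiv_fun_pow, fderiv_const_apply, add_apply, sub_apply, neg_apply, smul_apply, zero_apply,
    smul_eq_mul, nsmul_eq_mul]
  linear_combination h3 - g p / 2 * h1

end

/-- From the N = 2 system (i) `f_x + g_y = 0`,
(ii) `(u₀)_x + 2Λ_x - (1/2)g(f_y - g_x) = 0`,
(iii) `-(u₀)_y + 2Λ_y + (1/2)f(f_y - g_x) = 0`,
the two conservation laws
`(u₀ + 2Λ + (1/4)(g² - f²))_x - ((1/2)fg)_y = 0` and
`(-u₀ + 2Λ - (1/4)(g² - f²))_y - ((1/2)fg)_x = 0` follow. -/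
theorem stmt_4 (Λ u₀ f g : ℝ × ℝ → ℝ)
    (hΛ : ContDiff ℝ 2 Λ) (hu₀ : ContDiff ℝ 2 u₀)
    (hf : ContDiff ℝ 2 f) (hg : ContDiff ℝ 2 g)
    (h1 : ∀ p, fderiv ℝ f p (1, 0) + fderiv ℝ g p (0, 1) = 0)
    (h2 : ∀ p, fderiv ℝ u₀ p (1, 0) + 2 * fderiv ℝ Λ p (1, 0)
      - (1 / 2) * g p * (fderiv ℝ f p (0, 1) - fderiv ℝ g p (1, 0)) = 0)
    (h3 : ∀ p, -fderiv ℝ u₀ p (0, 1) + 2 * fderiv ℝ Λ p (0, 1)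
      + (1 / 2) * f p * (fderiv ℝ f p (0, 1) - fderiv ℝ g p (1, 0)) = 0) :
    ∀ p : ℝ × ℝ,
      fderiv ℝ (fun q => u₀ q + 2 * Λ q + (1 / 4) * ((g q) ^ 2 - (f q) ^ 2)) p (1, 0)
        - fderiv ℝ (fun q => (1 / 2) * f q * g q) p (0, 1) = 0 ∧
      fderiv ℝ (fun q => -u₀ q + 2 * Λ q - (1 / 4) * ((g q) ^ 2 - (f q) ^ 2)) p (0, 1)
        - fderiv ℝ (fun q => (1 / 2) * f q * g q) p (1, 0) = 0 := by
  intro p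
  have dΛ := hΛ.differentiable two_ne_zero p
  have du₀ := hu₀.differentiable two_ne_zero p
  have df := hf.differentiable two_ne_zero p
  have dg := hg.differentiable two_ne_zero p
  exact ⟨first_conservation_law_at dΛ du₀ df dg (h1 p) (h2 p),
    second_conservation_law_at dΛ du₀ df dg (h1 p) (h3 p)⟩
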